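/- arXiv:2312.02245 — 5 statements merged into one kernel-verified Lean document; each statement's English description precedes it below -/
import Mathlib

section
/- The series ∑_{n=1}^∞ 3/(n² · C(2n,n)) converges to π²/6, where C(2n,n) is the central binomial coefficient. -/
/-!
Both `∑ 1 / (n² C(2n, n))` and `π² / 18` equal `I = ∫₀¹ (log (1 + t) - log (1 + t³)) / t dt`.
Since `1 + t³ = (1 + t) (1 - t (1 - t))`, the integrand is `-log (1 - t (1 - t)) / t`; expanding
in powers of `t (1 - t)` and integrating termwise with the Beta integral
`∫₀¹ tⁿ (1 - t)ⁿ⁺¹ dt = n! (n + 1)! / (2n + 2)!` gives the series. Expanding the two logarithms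
in powers of `t` instead gives `I = (2/3) ∑ (-1)ᵏ / (k + 1)² = (2/3) (π² / 12)`.
-/

open Real MeasureTheory Set
open scoped Interval Nat

theorem integral_pow_mul_one_sub_pow (a b : ℕ) :
    ∫ x in (0 : ℝ)..1, x ^ a * (1 - x) ^ b = (a ! * b ! : ℝ) / (a + b + 1)! := by
  induction b generalizing a with
  | zero => simp [integral_pow, Nat.factorial_succ, field]
  | succ b ih =>
    have hsplit : ∀ x : ℝ,
        x ^ a * (1 - x) ^ (b + 1) = x ^ a * (1 - x) ^ b - x ^ (a + 1) * (1 - x) ^ b :=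
      fun x => by ring
    simp_rw [hsplit]
    rw [intervalIntegral.integral_sub (Continuous.intervalIntegrable (by fun_prop) _ _)
      (Continuous.intervalIntegrable (by fun_prop) _ _), ih, ih,
      show a + 1 + b + 1 = a + b + 1 + 1 by ring, show a + (b + 1) + 1 = a + b + 1 + 1 by ring]
    simp only [Nat.factorial_succ]
    push_cast
    field_simp
    ring

theorem integral_pow_mul_one_sub_pow_succ_div (n : ℕ) :
    ∫ t in (0 : ℝ)..1, t ^ n * (1 - t) ^ (n + 1) / (n + 1)
      = 1 / ((n + 1) ^ 2 * Nat.choose (2 * (n + 1)) (n + 1)) := by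
  rw [intervalIntegral.integral_div, integral_pow_mul_one_sub_pow, two_mul, Nat.cast_add_choose,
    show n + (n + 1) + 1 = n + 1 + (n + 1) by ring, Nat.factorial_succ n]
  push_cast
  field_simp

theorem integral_neg_one_pow_div_mul_pow_sub_pow (k : ℕ) :
    ∫ t in (0 : ℝ)..1, (-1) ^ k / (k + 1) * (t ^ k - t ^ (3 * k + 2))
      = 2 / 3 * ((-1) ^ k / ((k : ℝ) + 1) ^ 2) := by
  rw [intervalIntegral.integral_const_mul, intervalIntegral.integral_sub
    (Continuous.intervalIntegrable (by fun_prop) _ _)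
    (Continuous.intervalIntegrable (by fun_prop) _ _), integral_pow, integral_pow]
  push_cast
  field_simp
  ring

theorem Real.hasSum_neg_one_pow_mul_pow_div_log_one_add {x : ℝ} (h : |x| < 1) :
    HasSum (fun k : ℕ => (-1) ^ k * x ^ (k + 1) / (k + 1)) (log (1 + x)) := by
  have := (hasSum_pow_div_log_of_abs_lt_one (x := -x) (by rwa [abs_neg])).neg
  simp only [sub_neg_eq_add, neg_neg] at this
  convert! this using 2 with k
  rw [neg_pow, pow_succ]
  ring

theorem Real.log_one_add_sub_log_one_add_pow_three {t : ℝ} (ht : t ≠ -1) :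
    log (1 + t) - log (1 + t ^ 3) = -log (1 - t * (1 - t)) := by
  have h₁ : 1 + t ≠ 0 := fun h => ht (by linarith)
  have h₂ : 1 - t * (1 - t) ≠ 0 := by nlinarith [sq_nonneg (t - 1 / 2)]
  rw [show 1 + t ^ 3 = (1 + t) * (1 - t * (1 - t)) by ring, log_mul h₁ h₂]
  ring

theorem hasSum_pow_mul_one_sub_pow_div {t : ℝ} (h : |t * (1 - t)| < 1) (ht : t ≠ 0) :
    HasSum (fun n : ℕ => t ^ n * (1 - t) ^ (n + 1) / (n + 1))
      ((log (1 + t) - log (1 + t ^ 3)) / t) := by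
  have ht' : t ≠ -1 := by
    rintro rfl
    norm_num at h
  rw [log_one_add_sub_log_one_add_pow_three ht']
  convert! (hasSum_pow_div_log_of_abs_lt_one h).div_const t using 2 with n
  rw [mul_pow]
  field_simp
  ring

theorem hasSum_neg_one_pow_div_mul_pow_sub_pow {t : ℝ} (h : |t| < 1) (ht : t ≠ 0) :
    HasSum (fun k : ℕ => (-1) ^ k / (k + 1) * (t ^ k - t ^ (3 * k + 2)))
      ((log (1 + t) - log (1 + t ^ 3)) / t) := by
  have h₃ : |t ^ 3| < 1 := by
    rw [abs_pow]
    exact pow_lt_one₀ (abs_nonneg t) h (by norm_num)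
  convert! ((hasSum_neg_one_pow_mul_pow_div_log_one_add h).sub
    (hasSum_neg_one_pow_mul_pow_div_log_one_add h₃)).div_const t using 2 with k
  rw [← pow_mul]
  field_simp
  ring

theorem norm_pow_mul_one_sub_pow_div_le {t : ℝ} (h₀ : 0 ≤ t) (h₁ : t ≤ 1) (n : ℕ) :
    ‖t ^ n * (1 - t) ^ (n + 1) / (n + 1)‖ ≤ (1 / 4) ^ n := by
  have hquarter : t * (1 - t) ≤ 1 / 4 := by nlinarith [sq_nonneg (t - 1 / 2)]
  rw [Real.norm_of_nonneg (by positivity), div_le_iff₀ (by positivity), pow_succ, ← mul_assoc,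
    ← mul_pow]
  calc (t * (1 - t)) ^ n * (1 - t) ≤ (1 / 4) ^ n * 1 := by gcongr; linarith
    _ ≤ (1 / 4) ^ n * (n + 1) := by gcongr; linarith [n.cast_nonneg (α := ℝ)]

theorem norm_neg_one_pow_div_mul_pow_sub_pow_le {t : ℝ} (h₀ : 0 ≤ t) (h₁ : t ≤ 1) (k : ℕ) :
    ‖(-1) ^ k / (k + 1) * (t ^ k - t ^ (3 * k + 2))‖ ≤ 2 * (1 - t) * t ^ k := by
  have hBernoulli : 1 - t ^ (2 * k + 2) ≤ (2 * k + 2) * (1 - t) := by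
    have := one_add_mul_sub_le_pow (by linarith : -1 ≤ t) (2 * k + 2)
    push_cast at this
    linarith
  have hsplit : t ^ k - t ^ (3 * k + 2) = t ^ k * (1 - t ^ (2 * k + 2)) := by ring
  have hnonneg : 0 ≤ 1 - t ^ (2 * k + 2) := by
    linarith [pow_le_one₀ h₀ h₁ (n := 2 * k + 2)]
  rw [hsplit, norm_mul, norm_div, norm_pow, norm_neg, norm_one, one_pow,
    Real.norm_of_nonneg (by positivity), Real.norm_of_nonneg (by positivity),
    div_mul_eq_mul_div, div_le_iff₀ (by positivity)]
  calc 1 * (t ^ k * (1 - t ^ (2 * k + 2))) ≤ t ^ k * ((2 * k + 2) * (1 - t)) := by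
        rw [one_mul]; gcongr
    _ = 2 * (1 - t) * t ^ k * (k + 1) := by ring

theorem ae_mem_uIoo_of_mem_uIoc (a b : ℝ) : ∀ᵐ t : ℝ, t ∈ Ι a b → t ∈ uIoo a b := by
  filter_upwards [(Ioo_ae_eq_Ioc (a := min a b) (b := max a b)).mem_iff] with t ht
  exact ht.mpr

theorem intervalIntegral.hasSum_integral_of_dominated_on_uIoo {E : Type*} [NormedAddCommGroup E]
    [NormedSpace ℝ E] {a b : ℝ} {F : ℕ → ℝ → E} {f : ℝ → E} (bound : ℕ → ℝ → ℝ) {g : ℝ → ℝ}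
    (hF_meas : ∀ n, AEStronglyMeasurable (F n) (volume.restrict (Ι a b)))
    (h_bound : ∀ n, ∀ t ∈ uIoo a b, ‖F n t‖ ≤ bound n t)
    (h_bound_sum : ∀ t ∈ uIoo a b, HasSum (fun n => bound n t) (g t))
    (hg : IntervalIntegrable g volume a b)
    (h_lim : ∀ t ∈ uIoo a b, HasSum (fun n => F n t) (f t)) :
    HasSum (fun n => ∫ t in a..b, F n t) (∫ t in a..b, f t) := by
  refine hasSum_integral_of_dominated_convergence bound hF_meas (fun n => ?_) ?_
    (hg.congr_uIoo fun t ht => (h_bound_sum t ht).tsum_eq.symm) ?_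
  · filter_upwards [ae_mem_uIoo_of_mem_uIoc a b] with t ht ht'
    exact h_bound n t (ht ht')
  · filter_upwards [ae_mem_uIoo_of_mem_uIoc a b] with t ht ht'
    exact (h_bound_sum t (ht ht')).summable
  · filter_upwards [ae_mem_uIoo_of_mem_uIoc a b] with t ht ht'
    exact h_lim t (ht ht')

theorem hasSum_integral_pow_mul_one_sub_pow_div :
    HasSum (fun n : ℕ => ∫ t in (0 : ℝ)..1, t ^ n * (1 - t) ^ (n + 1) / (n + 1))
      (∫ t in (0 : ℝ)..1, (log (1 + t) - log (1 + t ^ 3)) / t) := by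
  refine intervalIntegral.hasSum_integral_of_dominated_on_uIoo (fun n _ => (1 / 4 : ℝ) ^ n)
    (g := fun _ => (1 - 1 / 4)⁻¹) (fun n => Continuous.aestronglyMeasurable (by fun_prop))
    ?_ ?_ intervalIntegrable_const ?_ <;> rw [uIoo_of_le zero_le_one]
  · exact fun n t ht => norm_pow_mul_one_sub_pow_div_le ht.1.le ht.2.le n
  · exact fun t _ => hasSum_geometric_of_lt_one (by norm_num) (by norm_num)
  · refine fun t ht => hasSum_pow_mul_one_sub_pow_div ?_ ht.1.ne'
    rw [abs_of_pos (mul_pos ht.1 (sub_pos.mpr ht.2))]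
    nlinarith [ht.1, ht.2]

theorem hasSum_integral_neg_one_pow_div_mul_pow_sub_pow :
    HasSum (fun k : ℕ => ∫ t in (0 : ℝ)..1, (-1) ^ k / (k + 1) * (t ^ k - t ^ (3 * k + 2)))
      (∫ t in (0 : ℝ)..1, (log (1 + t) - log (1 + t ^ 3)) / t) := by
  refine intervalIntegral.hasSum_integral_of_dominated_on_uIoo (fun k t => 2 * (1 - t) * t ^ k)
    (g := fun _ => 2) (fun k => Continuous.aestronglyMeasurable (by fun_prop))
    ?_ ?_ intervalIntegrable_const ?_ <;> rw [uIoo_of_le zero_le_one]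
  · exact fun k t ht => norm_neg_one_pow_div_mul_pow_sub_pow_le ht.1.le ht.2.le k
  · intro t ht
    convert! (hasSum_geometric_of_lt_one ht.1.le ht.2).mul_left (2 * (1 - t)) using 1
    rw [mul_assoc, mul_inv_cancel₀ (sub_pos.mpr ht.2).ne', mul_one]
  · exact fun t ht => hasSum_neg_one_pow_div_mul_pow_sub_pow
      (abs_lt.mpr ⟨by linarith [ht.1], ht.2⟩) ht.1.ne'

theorem hasSum_neg_one_pow_div_succ_sq :
    HasSum (fun k : ℕ => (-1) ^ k / ((k : ℝ) + 1) ^ 2) (π ^ 2 / 12) := by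
  have hζ : HasSum (fun k : ℕ => 1 / ((k : ℝ) + 1) ^ 2) (π ^ 2 / 6) := by
    simpa using (hasSum_nat_add_iff' 1).mpr hasSum_zeta_two
  -- the difference vanishes at even `k` and is `1 / (2 (j + 1) ^ 2)` at `k = 2 j + 1`
  have hdiff : HasSum (fun k : ℕ => 1 / ((k : ℝ) + 1) ^ 2 - (-1) ^ k / ((k : ℝ) + 1) ^ 2)
      (0 + π ^ 2 / 12) := by
    refine HasSum.even_add_odd ?_ ?_
    · simp [pow_mul]
    · convert! hζ.mul_left (1 / 2) using 1
      · funext j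
        push_cast
        rw [pow_succ (-1 : ℝ), pow_mul]
        field_simp
        ring
      · ring
  convert! hζ.sub hdiff using 1
  · funext k; ring
  · ring

theorem hasSum_inv_sq_mul_choose :
    HasSum (fun n : ℕ => 1 / (((n : ℝ) + 1) ^ 2 * Nat.choose (2 * (n + 1)) (n + 1)))
      (π ^ 2 / 18) := by
  have hA := hasSum_integral_pow_mul_one_sub_pow_div
  have hB := hasSum_integral_neg_one_pow_div_mul_pow_sub_pow
  simp only [integral_pow_mul_one_sub_pow_succ_div] at hA
  simp only [integral_neg_one_pow_div_mul_pow_sub_pow] at hB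
  have hI : ∫ t in (0 : ℝ)..1, (log (1 + t) - log (1 + t ^ 3)) / t = π ^ 2 / 18 :=
    hB.unique (by convert! hasSum_neg_one_pow_div_succ_sq.mul_left (2 / 3) using 1; ring)
  rwa [hI] at hA

theorem stmt0 :
    HasSum (fun n : ℕ => (3 : ℝ) / ((n + 1) ^ 2 * Nat.choose (2 * (n + 1)) (n + 1)))
      (π ^ 2 / 6) := by
  convert! hasSum_inv_sq_mul_choose.mul_left 3 using 1
  · funext n
    ring
  · ring
end

section
/- For all x in (-1,1), arcsin(x) = ∑_{n=0}^∞ (2^{-2n}/(2n+1)) · C(2n,n) · x^{2n+1}. -/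
/-!
The binomial series gives `1 / √(1 - t) = ∑ C(2n, n) / 4ⁿ tⁿ` for `|t| < 1`, because
`Ring.choose (n - 1/2) n = C(2n, n) / 4ⁿ`. With `t = x²` this is the derivative of the odd series
`∑ C(2n, n) / 4ⁿ / (2n + 1) x^(2n+1)`, which may be differentiated term by term inside the unit
disc. So the series and `arcsin` have the same derivative on `(-1, 1)` and agree at `0`.
-/

open Real Set Nat

lemma ascPochhammer_eval_half (n : ℕ) :
    (ascPochhammer ℝ n).eval (1 / 2) = n ! * n.centralBinom / 4 ^ n := by
  induction n with
  | zero => simp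
  | succ n ih =>
    have hrec : ((n + 1 : ℕ) : ℝ) * (n + 1).centralBinom =
        2 * (2 * n + 1) * n.centralBinom := by
      exact_mod_cast Nat.succ_mul_centralBinom_succ n
    rw [ascPochhammer_succ_eval, ih, Nat.factorial_succ, Nat.cast_mul, pow_succ]
    field_simp
    linear_combination -2 * hrec

lemma Ring.choose_half_add_natCast_sub_one (n : ℕ) :
    Ring.choose ((1 / 2 : ℝ) + n - 1) n = n.centralBinom / 4 ^ n := by
  rw [Ring.choose_eq_smul, Polynomial.descPochhammer_smeval_eq_ascPochhammer,
    Polynomial.ascPochhammer_smeval_eq_eval, smul_eq_mul,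
    show (1 / 2 : ℝ) + n - 1 - n + 1 = 1 / 2 by ring, ascPochhammer_eval_half]
  field_simp

lemma hasSum_centralBinom_div_four_pow_mul_pow {t : ℝ} (ht : |t| < 1) :
    HasSum (fun n ↦ n.centralBinom / 4 ^ n * t ^ n) (1 / √(1 - t)) := by
  have hball : t ∈ Metric.eball (0 : ℝ) 1 := by
    rw [← ENNReal.coe_one, Metric.eball_coe]
    simpa using ht
  have := (Real.one_div_one_sub_rpow_hasFPowerSeriesOnBall_zero (1 / 2)).hasSum hball
  rw [FormalMultilinearSeries.ofScalars_apply_eq', zero_add, ← Real.sqrt_eq_rpow] at this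
  simpa only [Ring.choose_half_add_natCast_sub_one, smul_eq_mul] using this

section OddPowerSeries

variable {a : ℕ → ℝ} {C r y : ℝ}

lemma abs_mul_pow_two_mul_le (ha : ∀ n, |a n| ≤ C) (hy : |y| ≤ r) (n : ℕ) :
    |a n * y ^ (2 * n)| ≤ C * (r ^ 2) ^ n := by
  rw [abs_mul, abs_pow, pow_mul, sq_abs]
  have hy2 : y ^ 2 ≤ r ^ 2 := sq_le_sq' (abs_le.1 hy).1 (abs_le.1 hy).2
  exact mul_le_mul (ha n) (pow_le_pow_left₀ (sq_nonneg y) hy2 n) (by positivity)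
    ((abs_nonneg _).trans (ha n))

lemma abs_div_mul_pow_two_mul_add_one_le (ha : ∀ n, |a n| ≤ C) (hy : |y| ≤ r) (hr : r ≤ 1)
    (n : ℕ) : |a n / (2 * n + 1) * y ^ (2 * n + 1)| ≤ C * (r ^ 2) ^ n := by
  have hy1 : |y| ≤ 1 := hy.trans hr
  calc |a n / (2 * n + 1) * y ^ (2 * n + 1)|
      = |a n * y ^ (2 * n)| * (|y| / (2 * n + 1)) := by
        have hpos : (0 : ℝ) < 2 * n + 1 := by positivity
        rw [abs_mul, abs_div, abs_mul, pow_succ, abs_mul, abs_of_pos hpos]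
        ring
    _ ≤ C * (r ^ 2) ^ n * 1 := by
        refine mul_le_mul (abs_mul_pow_two_mul_le ha hy n) ?_ (by positivity)
          ((abs_nonneg _).trans (abs_mul_pow_two_mul_le ha hy n))
        rw [div_le_one (by positivity)]
        linarith [(Nat.cast_nonneg n : (0:ℝ) ≤ n)]
    _ = C * (r ^ 2) ^ n := mul_one _

lemma summable_div_mul_pow_two_mul_add_one (ha : ∀ n, |a n| ≤ C) (hy : |y| < 1) :
    Summable fun n ↦ a n / (2 * n + 1) * y ^ (2 * n + 1) :=
  .of_norm_bounded
    ((summable_geometric_of_lt_one (sq_nonneg |y|)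
      (pow_lt_one₀ (abs_nonneg y) hy two_ne_zero)).mul_left C)
    fun n ↦ abs_div_mul_pow_two_mul_add_one_le ha le_rfl hy.le n

lemma hasDerivAt_tsum_div_mul_pow_two_mul_add_one (ha : ∀ n, |a n| ≤ C) {x : ℝ}
    (hx : |x| < 1) :
    HasDerivAt (fun y ↦ ∑' n, a n / (2 * n + 1) * y ^ (2 * n + 1))
      (∑' n, a n * x ^ (2 * n)) x := by
  obtain ⟨r, hxr, hr1⟩ := exists_between hx
  have hr0 : 0 < r := (abs_nonneg x).trans_lt hxr
  have hderiv (n : ℕ) (t : ℝ) :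
      HasDerivAt (fun z ↦ a n / (2 * n + 1) * z ^ (2 * n + 1)) (a n * t ^ (2 * n)) t := by
    refine ((hasDerivAt_pow (2 * n + 1) t).const_mul (a n / (2 * n + 1))).congr_deriv ?_
    rw [Nat.add_sub_cancel]
    push_cast
    field_simp
  exact hasDerivAt_tsum_of_isPreconnected
    ((summable_geometric_of_lt_one (sq_nonneg r) (pow_lt_one₀ hr0.le hr1 two_ne_zero)).mul_left C)
    isOpen_Ioo isPreconnected_Ioo (fun n t _ ↦ hderiv n t)
    (fun n t ht ↦ abs_mul_pow_two_mul_le ha (abs_le.2 ⟨ht.1.le, ht.2.le⟩) n)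
    (show (0 : ℝ) ∈ Ioo (-r) r from ⟨neg_lt_zero.2 hr0, hr0⟩)
    (by simp) (abs_lt.1 hxr)

end OddPowerSeries

lemma abs_centralBinom_div_four_pow_le_one (n : ℕ) : |(n.centralBinom : ℝ) / 4 ^ n| ≤ 1 := by
  rw [abs_of_nonneg (by positivity), div_le_one (by positivity)]
  exact_mod_cast Nat.centralBinom_le_four_pow n

lemma tsum_centralBinom_div_four_pow_mul_pow_eq_arcsin {x : ℝ} (hx : x ∈ Ioo (-1 : ℝ) 1) :
    ∑' n : ℕ, (n.centralBinom : ℝ) / 4 ^ n / (2 * n + 1) * x ^ (2 * n + 1) = arcsin x := by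
  set F : ℝ → ℝ :=
    fun y ↦ ∑' n : ℕ, (n.centralBinom : ℝ) / 4 ^ n / (2 * n + 1) * y ^ (2 * n + 1)
  have hF : ∀ y ∈ Ioo (-1 : ℝ) 1, HasDerivAt F (1 / √(1 - y ^ 2)) y := fun y hy ↦ by
    have hy : |y| < 1 := abs_lt.2 hy
    have hy2 : |y ^ 2| < 1 := by rw [abs_pow]; exact pow_lt_one₀ (abs_nonneg y) hy two_ne_zero
    convert hasDerivAt_tsum_div_mul_pow_two_mul_add_one abs_centralBinom_div_four_pow_le_one hy
      using 1
    simp only [pow_mul]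
    exact (hasSum_centralBinom_div_four_pow_mul_pow hy2).tsum_eq.symm
  have harcsin : ∀ y ∈ Ioo (-1 : ℝ) 1, HasDerivAt arcsin (1 / √(1 - y ^ 2)) y :=
    fun y hy ↦ hasDerivAt_arcsin hy.1.ne' hy.2.ne
  refine isOpen_Ioo.eqOn_of_deriv_eq isPreconnected_Ioo
    (fun y hy ↦ (hF y hy).differentiableAt.differentiableWithinAt)
    (fun y hy ↦ (harcsin y hy).differentiableAt.differentiableWithinAt)
    (fun y hy ↦ (hF y hy).deriv.trans (harcsin y hy).deriv.symm)
    (show (0 : ℝ) ∈ Ioo (-1) 1 by norm_num) (by simp [F]) hx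

theorem stmt2 (x : ℝ) (hx : x ∈ Set.Ioo (-1 : ℝ) 1) :
    HasSum (fun n : ℕ => (2 : ℝ) ^ (-(2 * n : ℤ)) / (2 * n + 1) *
      Nat.choose (2 * n) n * x ^ (2 * n + 1)) (Real.arcsin x) := by
  have hcoeff (n : ℕ) : (2 : ℝ) ^ (-(2 * n : ℤ)) * Nat.choose (2 * n) n =
      n.centralBinom / 4 ^ n := by
    rw [zpow_neg, zpow_mul, zpow_natCast, Nat.centralBinom_eq_two_mul_choose]
    norm_num [div_eq_inv_mul]
  rw [← tsum_centralBinom_div_four_pow_mul_pow_eq_arcsin hx]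
  convert (summable_div_mul_pow_two_mul_add_one abs_centralBinom_div_four_pow_le_one
    (abs_lt.2 hx)).hasSum using 2 with n
  rw [← hcoeff]
  ring
end

section
/- For all x in (-1,1), (arcsin x)² = ∑_{n=1}^∞ v_n x^{2n}, where v_n = 2^{2n-1}((n-1)!)²/(2n)!. -/
/-! The series `F y = ∑ v_{n+1} y^(2n+2)` converges on `(-1, 1)` and can be differentiated
termwise twice; the recurrence `(2n+4)(2n+3) v_{n+2} = (2n+2)² v_{n+1}` says exactly that
`(1 - y²) F'' - y F' = 2`. Substituting `y = sin t` turns this into `(F'(sin t) cos t)' = 2`,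
so `F'(sin t) cos t = 2t`, hence `(F (sin t))' = 2t`; as everything vanishes at `t = 0`,
`F (sin t) = t²` on `(-π/2, π/2)`, i.e. `F = arcsin²` on `(-1, 1)`. -/

open Real Set

lemma summable_add_one_pow_mul_geometric (k : ℕ) {r : ℝ} (hr : |r| < 1) :
    Summable fun n : ℕ => ((n : ℝ) + 1) ^ k * r ^ n := by
  have h : ∀ n : ℕ, ((n : ℝ) + 1) ^ k * r ^ n =
      ∑ i ∈ Finset.range (k + 1), (k.choose i : ℝ) * ((n : ℝ) ^ i * r ^ n) := fun n => by
    rw [add_pow, Finset.sum_mul]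
    exact Finset.sum_congr rfl fun i _ => by ring
  simp only [h]
  have hr' : ‖r‖ < 1 := by rwa [Real.norm_eq_abs]
  exact summable_sum fun i _ => (summable_pow_mul_geometric_of_norm_lt_one i hr').mul_left _

lemma abs_mul_pow_le_of_abs_le {a b z : ℝ} (ha : |a| ≤ b) (hz : |z| ≤ 1) {n e : ℕ}
    (he : n ≤ e) : |a * z ^ e| ≤ b * |z| ^ n := by
  rw [abs_mul, abs_pow]
  exact mul_le_mul ha (pow_le_pow_of_le_one (abs_nonneg z) hz he) (by positivity)
    ((abs_nonneg a).trans ha)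

def HasPolynomialGrowth (a : ℕ → ℝ) : Prop :=
  ∃ C : ℝ, ∃ k : ℕ, ∀ n, |a n| ≤ C * ((n : ℝ) + 1) ^ k

namespace HasPolynomialGrowth

variable {a : ℕ → ℝ}

lemma linear_mul (ha : HasPolynomialGrowth a) (p q : ℝ) :
    HasPolynomialGrowth fun n => (p * n + q) * a n := by
  obtain ⟨C, k, hC⟩ := ha
  refine ⟨(|p| + |q|) * C, k + 1, fun n => ?_⟩
  have hlin : |p * n + q| ≤ (|p| + |q|) * ((n : ℝ) + 1) := by
    have hn : (0 : ℝ) ≤ n := n.cast_nonneg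
    calc |p * n + q| ≤ |p| * n + |q| := by
          simpa [abs_mul, abs_of_nonneg hn] using abs_add_le (p * n) q
      _ ≤ (|p| + |q|) * ((n : ℝ) + 1) := by nlinarith [abs_nonneg p, abs_nonneg q]
  rw [abs_mul]
  calc |p * n + q| * |a n| ≤ (|p| + |q|) * ((n : ℝ) + 1) * (C * ((n : ℝ) + 1) ^ k) :=
        mul_le_mul hlin (hC n) (abs_nonneg _) (by positivity)
    _ = (|p| + |q|) * C * ((n : ℝ) + 1) ^ (k + 1) := by ring

lemma summable_mul_pow (ha : HasPolynomialGrowth a) {e : ℕ → ℕ} (he : ∀ n, n ≤ e n) {y : ℝ}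
    (hy : |y| < 1) : Summable fun n => a n * y ^ e n := by
  obtain ⟨C, k, hC⟩ := ha
  refine .of_norm_bounded
    ((summable_add_one_pow_mul_geometric k (by rwa [abs_abs] : |(|y|)| < 1)).mul_left C)
    fun n => ?_
  rw [Real.norm_eq_abs, ← mul_assoc]
  exact abs_mul_pow_le_of_abs_le (hC n) hy.le (he n)

lemma hasDerivAt_tsum (ha : HasPolynomialGrowth a) (j : ℕ) {y : ℝ} (hy : |y| < 1) :
    HasDerivAt (fun z => ∑' n, a n * z ^ (2 * n + j))
      (∑' n, (2 * n + j) * a n * y ^ (2 * n + j - 1)) y := by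
  obtain ⟨C, k, hC⟩ := ha.linear_mul 2 j
  obtain ⟨q, hyq, hq1⟩ := exists_between hy
  have hq : |q| < 1 := by rw [abs_of_nonneg ((abs_nonneg y).trans hyq.le)]; exact hq1
  replace hyq : y ∈ Ioo (-q) q := abs_lt.1 hyq
  refine hasDerivAt_tsum_of_isPreconnected (g := fun n z => a n * z ^ (2 * n + j))
    (g' := fun n z => (2 * n + j) * a n * z ^ (2 * n + j - 1))
    ((summable_add_one_pow_mul_geometric k hq).mul_left C) isOpen_Ioo isPreconnected_Ioo
    (fun n z _ => ?_) (fun n z hz => ?_) hyq (ha.summable_mul_pow (by omega) hy) hyq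
  · exact ((hasDerivAt_pow _ z).const_mul (a n)).congr_deriv (by push_cast; ring)
  · have hzq : |z| < q := abs_lt.2 hz
    rw [Real.norm_eq_abs]
    calc |(2 * n + j) * a n * z ^ (2 * n + j - 1)| ≤ C * ((n : ℝ) + 1) ^ k * |z| ^ n :=
          abs_mul_pow_le_of_abs_le (hC n) (by linarith) (by omega)
      _ ≤ C * ((n : ℝ) + 1) ^ k * q ^ n := by
          have : 0 ≤ C := (abs_nonneg _).trans ((hC 0).trans_eq (by simp))
          gcongr
      _ = C * (((n : ℝ) + 1) ^ k * q ^ n) := mul_assoc _ _ _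

end HasPolynomialGrowth

/-- The paper's `v_{n+1}`. -/
noncomputable def arcsinSqCoeff (n : ℕ) : ℝ :=
  (2 : ℝ) ^ (2 * (n + 1) - 1) * (Nat.factorial n) ^ 2 / Nat.factorial (2 * (n + 1))

lemma arcsinSqCoeff_zero : arcsinSqCoeff 0 = 1 := by
  norm_num [arcsinSqCoeff]

lemma arcsinSqCoeff_pos (n : ℕ) : 0 < arcsinSqCoeff n := by
  unfold arcsinSqCoeff
  positivity

lemma arcsinSqCoeff_succ (n : ℕ) :
    (2 * n + 4) * (2 * n + 3) * arcsinSqCoeff (n + 1) = (2 * n + 2) ^ 2 * arcsinSqCoeff n := by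
  unfold arcsinSqCoeff
  rw [show 2 * (n + 1 + 1) = 2 * (n + 1) + 1 + 1 by ring,
    show 2 * (n + 1) + 1 + 1 - 1 = 2 * (n + 1) - 1 + 2 by omega,
    Nat.factorial_succ (2 * (n + 1) + 1), Nat.factorial_succ (2 * (n + 1)), Nat.factorial_succ n]
  push_cast
  field_simp
  ring

lemma arcsinSqCoeff_le_one (n : ℕ) : arcsinSqCoeff n ≤ 1 := by
  induction n with
  | zero => exact arcsinSqCoeff_zero.le
  | succ n ih =>
    have hrec := arcsinSqCoeff_succ n
    have hc := arcsinSqCoeff_pos n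
    nlinarith [arcsinSqCoeff_pos (n + 1), (n.cast_nonneg : (0 : ℝ) ≤ n)]

lemma hasPolynomialGrowth_arcsinSqCoeff : HasPolynomialGrowth arcsinSqCoeff :=
  ⟨1, 0, fun n => by simpa [abs_of_pos (arcsinSqCoeff_pos n)] using arcsinSqCoeff_le_one n⟩

noncomputable def arcsinSqSeries (y : ℝ) : ℝ :=
  ∑' n, arcsinSqCoeff n * y ^ (2 * n + 2)

noncomputable def arcsinSqSeries' (y : ℝ) : ℝ :=
  ∑' n, (2 * n + 2) * arcsinSqCoeff n * y ^ (2 * n + 1)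

noncomputable def arcsinSqSeries'' (y : ℝ) : ℝ :=
  ∑' n, (2 * n + 1) * ((2 * n + 2) * arcsinSqCoeff n) * y ^ (2 * n)

lemma hasDerivAt_arcsinSqSeries {y : ℝ} (hy : |y| < 1) :
    HasDerivAt arcsinSqSeries (arcsinSqSeries' y) y := by
  convert hasPolynomialGrowth_arcsinSqCoeff.hasDerivAt_tsum 2 hy using 1
  · rfl
  · simp only [arcsinSqSeries', Nat.cast_ofNat]
    rfl

lemma hasDerivAt_arcsinSqSeries' {y : ℝ} (hy : |y| < 1) :
    HasDerivAt arcsinSqSeries' (arcsinSqSeries'' y) y := by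
  convert (hasPolynomialGrowth_arcsinSqCoeff.linear_mul 2 2).hasDerivAt_tsum 1 hy using 1
  · ext z
    simp only [arcsinSqSeries']
  · simp only [arcsinSqSeries'', Nat.cast_one]
    rfl

lemma arcsinSqSeries_ode {y : ℝ} (hy : |y| < 1) :
    (1 - y ^ 2) * arcsinSqSeries'' y - y * arcsinSqSeries' y = 2 := by
  have hc₁ := hasPolynomialGrowth_arcsinSqCoeff.linear_mul 2 2
  have hc₂ := hc₁.linear_mul 2 1
  have hshift : arcsinSqSeries'' y =
      2 + ∑' n, (2 * n + 2) ^ 2 * arcsinSqCoeff n * y ^ (2 * n + 2) := by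
    rw [arcsinSqSeries'', (hc₂.summable_mul_pow (e := (2 * ·)) (by omega) hy).tsum_eq_zero_add]
    congr 1
    · norm_num [arcsinSqCoeff_zero]
    · refine tsum_congr fun n => ?_
      push_cast
      linear_combination y ^ (2 * n + 2) * arcsinSqCoeff_succ n
  have hmix : y ^ 2 * arcsinSqSeries'' y + y * arcsinSqSeries' y =
      ∑' n, (2 * n + 2) ^ 2 * arcsinSqCoeff n * y ^ (2 * n + 2) := by
    have h₂ : y ^ 2 * arcsinSqSeries'' y =
        ∑' n, (2 * n + 1) * ((2 * n + 2) * arcsinSqCoeff n) * y ^ (2 * n + 2) := by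
      rw [arcsinSqSeries'', ← tsum_mul_left]
      exact tsum_congr fun n => by ring
    have h₁ : y * arcsinSqSeries' y = ∑' n, (2 * n + 2) * arcsinSqCoeff n * y ^ (2 * n + 2) := by
      rw [arcsinSqSeries', ← tsum_mul_left]
      exact tsum_congr fun n => by ring
    rw [h₂, h₁, ← (hc₂.summable_mul_pow (e := (2 * · + 2)) (by omega) hy).tsum_add
      (hc₁.summable_mul_pow (e := (2 * · + 2)) (by omega) hy)]
    exact tsum_congr fun n => by ring
  linear_combination hshift - hmix

lemma abs_sin_lt_one_of_mem_Ioo {t : ℝ} (ht : t ∈ Ioo (-(π / 2)) (π / 2)) : |sin t| < 1 := by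
  rw [← sq_lt_one_iff_abs_lt_one]
  nlinarith [cos_pos_of_mem_Ioo ht, sin_sq_add_cos_sq t]

lemma eqOn_Ioo_of_hasDerivAt {f g f' : ℝ → ℝ} {a b t₀ : ℝ}
    (hf : ∀ t ∈ Ioo a b, HasDerivAt f (f' t) t) (hg : ∀ t ∈ Ioo a b, HasDerivAt g (f' t) t)
    (ht₀ : t₀ ∈ Ioo a b) (h : f t₀ = g t₀) : EqOn f g (Ioo a b) :=
  isOpen_Ioo.eqOn_of_deriv_eq isPreconnected_Ioo
    (fun t ht => (hf t ht).differentiableAt.differentiableWithinAt)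
    (fun t ht => (hg t ht).differentiableAt.differentiableWithinAt)
    (fun t ht => (hf t ht).deriv.trans (hg t ht).deriv.symm) ht₀ h

lemma zero_mem_Ioo_neg_pi_div_two : (0 : ℝ) ∈ Ioo (-(π / 2)) (π / 2) :=
  ⟨by linarith [pi_div_two_pos], pi_div_two_pos⟩

lemma arcsinSqSeries'_sin_mul_cos {t : ℝ} (ht : t ∈ Ioo (-(π / 2)) (π / 2)) :
    arcsinSqSeries' (sin t) * cos t = 2 * t := by
  refine eqOn_Ioo_of_hasDerivAt (f := fun s => arcsinSqSeries' (sin s) * cos s) (g := (2 * ·))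
    (f' := fun _ => 2) (fun s hs => ?_)
    (fun s _ => by simpa using (hasDerivAt_id s).const_mul (2 : ℝ))
    zero_mem_Ioo_neg_pi_div_two (by simp [arcsinSqSeries']) ht
  have hsin := abs_sin_lt_one_of_mem_Ioo hs
  refine (((hasDerivAt_arcsinSqSeries' hsin).comp s (hasDerivAt_sin s)).mul
    (hasDerivAt_cos s)).congr_deriv ?_
  simp only [Function.comp_apply]
  linear_combination arcsinSqSeries_ode hsin + arcsinSqSeries'' (sin s) * sin_sq_add_cos_sq s

lemma arcsinSqSeries_sin {t : ℝ} (ht : t ∈ Ioo (-(π / 2)) (π / 2)) :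
    arcsinSqSeries (sin t) = t ^ 2 := by
  refine eqOn_Ioo_of_hasDerivAt (f := fun s => arcsinSqSeries (sin s)) (g := (· ^ 2))
    (f' := (2 * ·)) (fun s hs => ?_)
    (fun s _ => by simpa using hasDerivAt_pow 2 s)
    zero_mem_Ioo_neg_pi_div_two (by simp [arcsinSqSeries]) ht
  have hsin := abs_sin_lt_one_of_mem_Ioo hs
  exact ((hasDerivAt_arcsinSqSeries hsin).comp s (hasDerivAt_sin s)).congr_deriv
    (arcsinSqSeries'_sin_mul_cos hs)

theorem stmt3 (x : ℝ) (hx : x ∈ Set.Ioo (-1 : ℝ) 1) :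
    HasSum (fun n : ℕ =>
        ((2 : ℝ) ^ (2 * (n + 1) - 1) * (Nat.factorial n) ^ 2 /
          Nat.factorial (2 * (n + 1))) * x ^ (2 * (n + 1)))
      (Real.arcsin x ^ 2) := by
  have ht : arcsin x ∈ Ioo (-(π / 2)) (π / 2) :=
    ⟨neg_pi_div_two_lt_arcsin.2 hx.1, arcsin_lt_pi_div_two.2 hx.2⟩
  have hseries := arcsinSqSeries_sin ht
  rw [sin_arcsin hx.1.le hx.2.le] at hseries
  rw [← hseries]
  exact (hasPolynomialGrowth_arcsinSqCoeff.summable_mul_pow (e := (2 * · + 2)) (by omega)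
    (abs_lt.2 hx)).hasSum
end

section
/- For all n ≥ 0, (n+1)(2n+1)·C(2n,n) · ∑_{i=0}^{n} C(2i,i)·C(2n-2i,n-i)/((2i+1)(2n-2i+1)) = 2^{4n}. -/
/-!
Write `c i` for the central binomial coefficient and `S n = ∑_{i+j=n} c i c j / (2i+1)`.
Since `1/((2i+1)(2j+1)) = (1/(2i+1) + 1/(2j+1)) / (2n+2)` when `i + j = n`, symmetry turns the
sum of the theorem into `S n / (n+1)`. Using `(k+1) c (k+1) = 2(2k+1) c k`, the terms of `S (n+1)`
and `S n` differ by a telescoping expression `g(i, j+1) - g(i+1, j)` with `g i j = i c i c j`,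
which gives `(2n+3) S (n+1) = 8(n+1) S n`, hence `(2n+1) c n S n = 16^n`.
-/

open Finset Nat

theorem Finset.Nat.sum_antidiagonal_telescope {M : Type*} [AddCommGroup M] (g : ℕ → ℕ → M)
    (n : ℕ) :
    ∑ p ∈ antidiagonal n, (g p.1 (p.2 + 1) - g (p.1 + 1) p.2) = g 0 (n + 1) - g (n + 1) 0 := by
  have h := sum_antidiagonal_succ (n := n) (f := fun p => g p.1 p.2)
  have h' := sum_antidiagonal_succ' (n := n) (f := fun p => g p.1 p.2)
  rw [sum_sub_distrib]
  dsimp only at h h'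
  rw [h] at h'
  linear_combination (norm := abel) -h'

theorem cast_centralBinom_succ (n : ℕ) :
    (centralBinom (n + 1) : ℚ) = 2 * (2 * n + 1) * centralBinom n / (n + 1) := by
  rw [eq_div_iff (Nat.cast_add_one_ne_zero n), mul_comm]
  exact_mod_cast succ_mul_centralBinom_succ n

def centralBinomConv (n : ℕ) : ℚ :=
  ∑ p ∈ antidiagonal n, (centralBinom p.1 * centralBinom p.2 : ℚ) / (2 * p.1 + 1)

theorem centralBinomConv_term_succ {n i j : ℕ} (hij : i + j = n) :
    ((n + 1) * (2 * n + 3) : ℚ) * (centralBinom i * centralBinom (j + 1) / (2 * i + 1))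
      = 8 * ((n + 1) ^ 2 : ℚ) * (centralBinom i * centralBinom j / (2 * i + 1))
        + ((i * centralBinom i * centralBinom (j + 1) : ℚ)
          - ((i + 1 : ℕ) : ℚ) * centralBinom (i + 1) * centralBinom j) := by
  subst hij
  rw [cast_centralBinom_succ i, cast_centralBinom_succ j]
  push_cast
  field_simp
  ring

theorem centralBinomConv_succ (n : ℕ) :
    (2 * n + 3 : ℚ) * centralBinomConv (n + 1) = 8 * (n + 1) * centralBinomConv n := by
  have hsum := sum_congr rfl fun p (hp : p ∈ antidiagonal n) =>
    centralBinomConv_term_succ (mem_antidiagonal.mp hp)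
  rw [sum_add_distrib, ← mul_sum, ← mul_sum,
    Finset.Nat.sum_antidiagonal_telescope (fun i j => (i * centralBinom i * centralBinom j : ℚ))]
    at hsum
  have hlast : (centralBinom (n + 1) : ℚ) / (2 * (n + 1 : ℕ) + 1) * (2 * n + 3) =
      centralBinom (n + 1) := by
    push_cast
    field_simp
    ring
  -- the telescoped boundary term `-(n+1) c (n+1)` cancels the extra term `(n+1, 0)` of `S (n+1)`
  unfold centralBinomConv
  rw [sum_antidiagonal_succ']
  simp only [centralBinom_zero, cast_one, mul_one, cast_zero, zero_mul, push_cast] at hsum hlast ⊢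
  apply mul_left_cancel₀ (Nat.cast_add_one_ne_zero n : (n : ℚ) + 1 ≠ 0)
  linear_combination hsum + (n + 1 : ℚ) * hlast

theorem two_mul_add_one_mul_centralBinom_mul_centralBinomConv (n : ℕ) :
    (2 * n + 1 : ℚ) * centralBinom n * centralBinomConv n = 16 ^ n := by
  induction n with
  | zero => simp [centralBinomConv]
  | succ n ih =>
    have hrec : ((n : ℚ) + 1) * centralBinom (n + 1) = 2 * (2 * n + 1) * centralBinom n := by
      rw [cast_centralBinom_succ]
      field_simp
    calc (2 * (n + 1 : ℕ) + 1 : ℚ) * centralBinom (n + 1) * centralBinomConv (n + 1)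
        = centralBinom (n + 1) * ((2 * n + 3) * centralBinomConv (n + 1)) := by push_cast; ring
      _ = 8 * (((n : ℚ) + 1) * centralBinom (n + 1)) * centralBinomConv n := by
        rw [centralBinomConv_succ]; ring
      _ = 16 ^ (n + 1) := by rw [hrec, pow_succ, ← ih]; ring

theorem sum_antidiagonal_centralBinom_div_odd_mul_odd (n : ℕ) :
    ∑ p ∈ antidiagonal n,
        (centralBinom p.1 * centralBinom p.2 : ℚ) / ((2 * p.1 + 1) * (2 * p.2 + 1))
      = centralBinomConv n / (n + 1) := by
  have hsplit : ∀ p ∈ antidiagonal n,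
      (centralBinom p.1 * centralBinom p.2 : ℚ) / ((2 * p.1 + 1) * (2 * p.2 + 1))
        = ((centralBinom p.1 * centralBinom p.2 : ℚ) / (2 * p.1 + 1)
          + (centralBinom p.2 * centralBinom p.1 : ℚ) / (2 * p.2 + 1)) / (2 * (n + 1)) := by
    intro p hp
    rw [← mem_antidiagonal.mp hp]
    push_cast
    field_simp
    ring
  have hswap := sum_antidiagonal_swap (n := n)
    (f := fun p => (centralBinom p.1 * centralBinom p.2 : ℚ) / (2 * p.1 + 1))
  simp only [Prod.fst_swap, Prod.snd_swap] at hswap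
  rw [sum_congr rfl hsplit, ← sum_div, sum_add_distrib, hswap]
  unfold centralBinomConv
  field_simp
  ring

theorem stmt6 (n : ℕ) :
    ((n + 1) * (2 * n + 1) * Nat.choose (2 * n) n : ℚ) *
      ∑ i ∈ Finset.range (n + 1),
        (Nat.choose (2 * i) i * Nat.choose (2 * (n - i)) (n - i) : ℚ) /
          ((2 * i + 1) * (2 * (n - i) + 1)) = 2 ^ (4 * n) := by
  have hsum : ∑ i ∈ range (n + 1),
        (Nat.choose (2 * i) i * Nat.choose (2 * (n - i)) (n - i) : ℚ) /
          ((2 * i + 1) * (2 * (n - i) + 1))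
      = centralBinomConv n / (n + 1) := by
    rw [← sum_antidiagonal_centralBinom_div_odd_mul_odd,
      sum_antidiagonal_eq_sum_range_succ (fun i j =>
        (centralBinom i * centralBinom j : ℚ) / ((2 * i + 1) * (2 * j + 1)))]
    refine sum_congr rfl fun i hi => ?_
    rw [Nat.cast_sub (Nat.lt_succ_iff.mp (mem_range.mp hi))]
    rfl
  have h16 : (2 : ℚ) ^ (4 * n) = 16 ^ n := by rw [pow_mul]; norm_num
  rw [hsum, h16, ← two_mul_add_one_mul_centralBinom_mul_centralBinomConv, centralBinom]
  field_simp
end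

section
/- For all n ≥ 0, ∑_{i=0}^{n} u_i·u_{n-i} = 2^{2n+1}·(n!)²/(2n+2)!, where u_k = 2^{-2k}·C(2k,k)/(2k+1). -/
theorem stmt7 (u : ℕ → ℚ)
    (hu : ∀ k : ℕ, u k = (2 : ℚ) ^ (-(2 * k : ℤ)) * Nat.choose (2 * k) k / (2 * k + 1)) :
    ∀ n : ℕ, ∑ i ∈ Finset.range (n + 1), u i * u (n - i) =
      2 ^ (2 * n + 1) * (Nat.factorial n) ^ 2 / Nat.factorial (2 * n + 2) := by
  -- recurrence for u
  have urec : ∀ k : ℕ, (2*(k:ℚ)+2)*(2*(k:ℚ)+3) * u (k+1) = (2*(k:ℚ)+1)^2 * u k := by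
    intro k
    have hc := Nat.succ_mul_centralBinom_succ k
    rw [Nat.centralBinom_eq_two_mul_choose, Nat.centralBinom_eq_two_mul_choose] at hc
    have hcq : ((k:ℚ)+1) * ((2*(k+1)).choose (k+1) : ℚ)
        = 2*(2*(k:ℚ)+1) * ((2*k).choose k : ℚ) := by exact_mod_cast hc
    rw [hu k, hu (k+1)]
    have hx : (2:ℚ)^(-(2*((k+1):ℕ) : ℤ)) = (2:ℚ)^(-(2*(k:ℕ) : ℤ)) / 4 := by
      push_cast
      rw [show -(2*((k:ℤ)+1)) = -(2*(k:ℤ)) + (-2) by ring,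
        zpow_add₀ (two_ne_zero : (2:ℚ) ≠ 0)]
      norm_num
      ring
    rw [hx]
    have hxne : (2:ℚ)^(-(2*(k:ℕ) : ℤ)) ≠ 0 := zpow_ne_zero _ two_ne_zero
    have h1 : (2*(k:ℚ)+1) ≠ 0 := by positivity
    have h3 : (2*((k:ℚ)+1)+1) ≠ 0 := by positivity
    have h4 : ((k:ℚ)+1) ≠ 0 := by positivity
    have hC : ((2*(k+1)).choose (k+1) : ℚ)
        = 2*(2*(k:ℚ)+1) * ((2*k).choose k : ℚ) / ((k:ℚ)+1) := by
      field_simp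
      linear_combination hcq
    rw [hC]
    push_cast
    field_simp
    ring
  -- explicit form of the recurrence
  have ue : ∀ k : ℕ, u (k+1) = (2*(k:ℚ)+1)^2 * u k / ((2*(k:ℚ)+2)*(2*(k:ℚ)+3)) := by
    intro k
    have hd : ((2*(k:ℚ)+2)*(2*(k:ℚ)+3)) ≠ 0 := by positivity
    field_simp
    linear_combination urec k
  -- key per-term telescoping identity
  have key : ∀ i j : ℕ,
      ((i:ℚ)+(j:ℚ)+1)*((i:ℚ)+(j:ℚ)+2)*(2*((i:ℚ)+(j:ℚ))+3) * (u i * u (j+1))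
        - 2*((i:ℚ)+(j:ℚ)+1)^3 * (u i * u j)
      = ((i:ℚ)+1)*(4*((i:ℚ)+1)^2 - 6*((i:ℚ)+(j:ℚ)+1)*((i:ℚ)+1) - 3*((i:ℚ)+(j:ℚ)) - 4)
          * (u (i+1) * u j)
        - (i:ℚ)*(4*(i:ℚ)^2 - 6*((i:ℚ)+(j:ℚ)+1)*(i:ℚ) - 3*((i:ℚ)+(j:ℚ)) - 4)
          * (u i * u (j+1)) := by
    intro i j
    rw [ue i, ue j]
    have hdi : ((2*(i:ℚ)+2)*(2*(i:ℚ)+3)) ≠ 0 := by positivity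
    have hdj : ((2*(j:ℚ)+2)*(2*(j:ℚ)+3)) ≠ 0 := by positivity
    field_simp
    ring
  have hu0 : u 0 = 1 := by rw [hu 0]; norm_num
  intro n
  induction n with
  | zero => simpa [hu0] using by norm_num [Nat.factorial]
  | succ n ih =>
    set f : ℕ → ℚ := fun i =>
      (i:ℚ)*(4*(i:ℚ)^2 - 6*((n:ℚ)+1)*(i:ℚ) - 3*(n:ℚ) - 4) * (u i * u (n+1-i)) with hf
    have hterm : ∀ i ∈ Finset.range (n+1),
        ((n:ℚ)+1)*((n:ℚ)+2)*(2*(n:ℚ)+3) * (u i * u (n+1-i))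
          - 2*((n:ℚ)+1)^3 * (u i * u (n-i)) = f (i+1) - f i := by
      intro i hi
      have hin : i ≤ n := Nat.lt_succ_iff.mp (Finset.mem_range.mp hi)
      obtain ⟨j, rfl⟩ : ∃ j, n = i + j := ⟨n - i, by omega⟩
      have e1 : i + j + 1 - i = j + 1 := by omega
      have e2 : i + j - i = j := by omega
      have e3 : i + j + 1 - (i+1) = j := by omega
      simp only [hf, e1, e2, e3]
      push_cast
      linear_combination key i j
    have hsum2 : ((n:ℚ)+1)*((n:ℚ)+2)*(2*(n:ℚ)+3)
          * ∑ i ∈ Finset.range (n+1), u i * u (n+1-i)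
        - 2*((n:ℚ)+1)^3 * ∑ i ∈ Finset.range (n+1), u i * u (n-i)
        = f (n+1) - f 0 := by
      rw [Finset.mul_sum, Finset.mul_sum, ← Finset.sum_sub_distrib,
        Finset.sum_congr rfl hterm, Finset.sum_range_sub]
    have hf0 : f 0 = 0 := by simp [hf]
    have hfn : f (n+1) = -(((n:ℚ)+1)*((n:ℚ)+2)*(2*(n:ℚ)+3)) * (u (n+1) * u 0) := by
      simp only [hf]
      rw [Nat.sub_self]
      push_cast
      ring
    have hsplit : ∑ i ∈ Finset.range (n+1+1), u i * u (n+1-i)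
        = (∑ i ∈ Finset.range (n+1), u i * u (n+1-i)) + u (n+1) * u 0 := by
      rw [Finset.sum_range_succ, Nat.sub_self]
    have hrec : ((n:ℚ)+1)*((n:ℚ)+2)*(2*(n:ℚ)+3)
          * ∑ i ∈ Finset.range (n+1+1), u i * u (n+1-i)
        = 2*((n:ℚ)+1)^3 * ∑ i ∈ Finset.range (n+1), u i * u (n-i) := by
      rw [hsplit]
      rw [hf0, hfn] at hsum2
      linarith [hsum2]
    rw [ih] at hrec
    have hd : ((n:ℚ)+1)*((n:ℚ)+2)*(2*(n:ℚ)+3) ≠ 0 := by positivity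
    have hfa : (Nat.factorial (2*(n+1)+2) : ℚ)
        = (2*(n:ℚ)+4)*(2*(n:ℚ)+3)*(Nat.factorial (2*n+2) : ℚ) := by
      rw [show 2*(n+1)+2 = (2*n+2)+1+1 by ring, Nat.factorial_succ, Nat.factorial_succ]
      push_cast
      ring
    have hfb : (Nat.factorial (n+1) : ℚ) = ((n:ℚ)+1) * (Nat.factorial n : ℚ) := by
      rw [Nat.factorial_succ]; push_cast; ring
    have hfact : (Nat.factorial (2*n+2) : ℚ) ≠ 0 := by
      exact_mod_cast (Nat.factorial_pos (2*n+2)).ne'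
    have hfact2 : (Nat.factorial (2*(n+1)+2) : ℚ) ≠ 0 := by
      exact_mod_cast (Nat.factorial_pos (2*(n+1)+2)).ne'
    have hpow : (2:ℚ)^(2*(n+1)+1) = (2:ℚ)^(2*n+1) * 4 := by
      rw [show 2*(n+1)+1 = (2*n+1)+2 by ring, pow_add]; norm_num
    have hfq : (0:ℚ) < (Nat.factorial (2*n+2) : ℚ) := by
      exact_mod_cast Nat.factorial_pos _
    have hrec2 : ((n:ℚ)+1)*((n:ℚ)+2)*(2*(n:ℚ)+3) * (Nat.factorial (2*n+2) : ℚ)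
          * ∑ i ∈ Finset.range (n+1+1), u i * u (n+1-i)
        = 2*((n:ℚ)+1)^3 * ((2:ℚ)^(2*n+1) * (Nat.factorial n : ℚ)^2) := by
      have hx2 : (2:ℚ)^(2*n+1) * (Nat.factorial n:ℚ)^2 / (Nat.factorial (2*n+2):ℚ)
            * (Nat.factorial (2*n+2):ℚ) = (2:ℚ)^(2*n+1) * (Nat.factorial n:ℚ)^2 :=
        div_mul_cancel₀ _ hfq.ne'
      linear_combination (Nat.factorial (2*n+2) : ℚ) * hrec + 2*((n:ℚ)+1)^3 * hx2
    have goal' : ∑ i ∈ Finset.range (n+1+1), u i * u (n+1-i)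
        = 2^(2*(n+1)+1) * (Nat.factorial (n+1) : ℚ)^2 / (Nat.factorial (2*(n+1)+2) : ℚ) := by
      rw [hfa, hfb, hpow]
      have hden : ((2*(n:ℚ)+4)*(2*(n:ℚ)+3)*(Nat.factorial (2*n+2):ℚ)) ≠ 0 :=
        mul_ne_zero (mul_ne_zero (by positivity) (by positivity)) hfq.ne'
      rw [eq_div_iff hden]
      apply mul_left_cancel₀ (by positivity : ((n:ℚ)+1) ≠ 0)
      linear_combination 2 * hrec2
    exact_mod_cast goal'
end
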